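/- arXiv:quant-ph/0610100 — 6 statements merged into one kernel-verified Lean document; each statement's English description precedes it below -/
import Mathlib

section
/- Any separable LMM density matrix σ on ℂ^d ⊗ ℂ^d satisfies Tr σ² ≤ 1/d; equivalently, the Hilbert–Schmidt distance of σ to the maximally mixed state ω = 𝟙/d² satisfies ‖σ − ω‖ ≤ √(d−1)/d. -/
/-!
Write `σ = ∑ λ_α |φ_α ⊗ ψ_α⟩⟨φ_α ⊗ ψ_α|`. Then
`Tr σ² = ∑ λ_α λ_β |⟨φ_α, φ_β⟩|² |⟨ψ_α, ψ_β⟩|²`, and by Cauchy–Schwarz the `ψ`-factors are at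
most `1`, so `Tr σ²` is bounded by the purity of the reduced state `ρ_A = ∑ λ_α |φ_α⟩⟨φ_α|`.
The LMM condition says `ρ_A = 𝟙/d`, whose purity is `1/d`. For the distance, any Hermitian `σ`
of unit trace on an `N`-dimensional space has `‖σ - 𝟙/N‖² = Tr σ² - 1/N`.
-/

open Matrix

namespace Matrix

variable {ι m n R : Type*}

def prodVec [Mul R] (φ : m → R) (ψ : n → R) : m × n → R := fun p => φ p.1 * ψ p.2

def mixture [Fintype ι] (w : ι → ℝ) (v : ι → m → ℂ) : Matrix m m ℂ :=
  ∑ α, (w α : ℂ) • vecMulVec (v α) (star (v α))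

def traceRight [Fintype n] [AddCommMonoid R] (M : Matrix (m × n) (m × n) R) : Matrix m m R :=
  fun a b => ∑ t, M (a, t) (b, t)

theorem trace_traceRight [Fintype m] [Fintype n] [AddCommMonoid R]
    (M : Matrix (m × n) (m × n) R) : (traceRight M).trace = M.trace :=
  (Fintype.sum_prod_type fun p => M p p).symm

theorem star_prodVec [CommMonoid R] [StarMul R] (φ : m → R) (ψ : n → R) :
    star (prodVec φ ψ) = prodVec (star φ) (star ψ) := by
  ext p
  exact star_mul' _ _

theorem prodVec_dotProduct_prodVec [Fintype m] [Fintype n] [CommSemiring R]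
    (φ φ' : m → R) (ψ ψ' : n → R) :
    prodVec φ ψ ⬝ᵥ prodVec φ' ψ' = (φ ⬝ᵥ φ') * (ψ ⬝ᵥ ψ') := by
  simp only [dotProduct, prodVec, Fintype.sum_prod_type, Finset.sum_mul_sum]
  exact Finset.sum_congr rfl fun _ _ => Finset.sum_congr rfl fun _ _ => by ring

theorem traceRight_vecMulVec_prodVec [Fintype n] [CommSemiring R] [StarMul R]
    (φ : m → R) (ψ : n → R) :
    traceRight (vecMulVec (prodVec φ ψ) (star (prodVec φ ψ))) =
      (star ψ ⬝ᵥ ψ) • vecMulVec φ (star φ) := by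
  ext a b
  simp only [traceRight, star_prodVec, vecMulVec_apply, prodVec, smul_apply, smul_eq_mul,
    dotProduct, Finset.sum_mul, Pi.star_apply]
  exact Finset.sum_congr rfl fun _ _ => by ring

theorem star_dotProduct_self_eq_sum_norm_sq [Fintype m] (x : m → ℂ) :
    star x ⬝ᵥ x = ((∑ i, ‖x i‖ ^ 2 : ℝ) : ℂ) := by
  rw [← EuclideanSpace.norm_sq_eq (WithLp.toLp 2 x), dotProduct_comm,
    ← EuclideanSpace.inner_toLp_toLp]
  push_cast
  exact inner_self_eq_norm_sq_to_K (𝕜 := ℂ) (WithLp.toLp 2 x : EuclideanSpace ℂ m)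

theorem norm_star_dotProduct_sq_le [Fintype m] (x y : m → ℂ) :
    ‖star x ⬝ᵥ y‖ ^ 2 ≤ (∑ i, ‖x i‖ ^ 2) * ∑ i, ‖y i‖ ^ 2 := by
  rw [← EuclideanSpace.norm_sq_eq (WithLp.toLp 2 x), ← EuclideanSpace.norm_sq_eq (WithLp.toLp 2 y),
    ← mul_pow, dotProduct_comm, ← EuclideanSpace.inner_toLp_toLp]
  exact pow_le_pow_left₀ (norm_nonneg _) (norm_inner_le_norm _ _) 2

theorem trace_vecMulVec_star_mul_vecMulVec_star [Fintype m] (x y : m → ℂ) :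
    (vecMulVec x (star x) * vecMulVec y (star y)).trace = (‖star x ⬝ᵥ y‖ ^ 2 : ℝ) := by
  rw [vecMulVec_mul_vecMulVec, trace_vecMulVec, dotProduct_smul, smul_eq_mul, dotProduct_comm x,
    star_dotProduct (v := y), Complex.ofReal_pow]
  exact Complex.mul_conj' _

open ComplexOrder in
theorem isHermitian_mixture [Fintype ι] [Fintype m] (w : ι → ℝ) (v : ι → m → ℂ) :
    (mixture w v).IsHermitian :=
  isSelfAdjoint_sum _ fun α _ =>
    (posSemidef_vecMulVec_self_star (v α)).isHermitian.smul (by simp [IsSelfAdjoint])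

theorem traceRight_mixture_prodVec [Fintype ι] [Fintype n] (w : ι → ℝ) (φ : ι → m → ℂ)
    (ψ : ι → n → ℂ) (hψ : ∀ α, ∑ t, ‖ψ α t‖ ^ 2 = 1) :
    traceRight (mixture w fun α => prodVec (φ α) (ψ α)) = mixture w φ := by
  have hψ_unit (α) : star (ψ α) ⬝ᵥ ψ α = 1 := by
    rw [star_dotProduct_self_eq_sum_norm_sq, hψ, Complex.ofReal_one]
  ext a b
  have h α := congrFun (congrFun (traceRight_vecMulVec_prodVec (φ α) (ψ α)) a) b
  simp only [traceRight, mixture, sum_apply, smul_apply, smul_eq_mul, hψ_unit, one_mul] at h ⊢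
  rw [Finset.sum_comm]
  exact Finset.sum_congr rfl fun α _ => by rw [← Finset.mul_sum, h α]

theorem re_trace_mixture_mul_self [Fintype ι] [Fintype m] (w : ι → ℝ) (v : ι → m → ℂ) :
    (mixture w v * mixture w v).trace.re =
      ∑ α, ∑ β, w α * w β * ‖star (v α) ⬝ᵥ v β‖ ^ 2 := by
  simp only [mixture, Finset.sum_mul_sum, smul_mul_smul, trace_sum, trace_smul,
    trace_vecMulVec_star_mul_vecMulVec_star, smul_eq_mul, Complex.re_sum]
  norm_cast

theorem re_trace_mixture_prodVec_mul_self_le [Fintype ι] [Fintype m] [Fintype n] (w : ι → ℝ)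
    (φ : ι → m → ℂ) (ψ : ι → n → ℂ) (hw : ∀ α, 0 ≤ w α) (hψ : ∀ α, ∑ t, ‖ψ α t‖ ^ 2 = 1) :
    ((mixture w fun α => prodVec (φ α) (ψ α)) *
        (mixture w fun α => prodVec (φ α) (ψ α))).trace.re ≤
      (mixture w φ * mixture w φ).trace.re := by
  simp only [re_trace_mixture_mul_self, star_prodVec, prodVec_dotProduct_prodVec, norm_mul,
    mul_pow]
  gcongr with α _ β _
  · exact mul_nonneg (hw α) (hw β)
  · refine mul_le_of_le_one_right (sq_nonneg _) ?_
    simpa [hψ] using norm_star_dotProduct_sq_le (ψ α) (ψ β)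

theorem trace_conjTranspose_sub_inv_card_smul_one_mul {𝕜 : Type*} [RCLike 𝕜] [Fintype m]
    [DecidableEq m] {σ : Matrix m m 𝕜} (hσ : σ.IsHermitian) (htr : σ.trace = 1) :
    ((σ - (Fintype.card m : 𝕜)⁻¹ • 1)ᴴ * (σ - (Fintype.card m : 𝕜)⁻¹ • 1)).trace =
      (σ * σ).trace - (Fintype.card m : 𝕜)⁻¹ := by
  set N : 𝕜 := (Fintype.card m : 𝕜)
  have hN : star N⁻¹ = N⁻¹ := by simp [N]
  rw [conjTranspose_sub, hσ.eq, conjTranspose_smul, hN, conjTranspose_one]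
  simp only [sub_mul, mul_sub, Matrix.smul_mul, Matrix.mul_smul, one_mul, mul_one, smul_smul,
    trace_sub, trace_smul, htr, trace_one, smul_eq_mul]
  rcases eq_or_ne N 0 with hN0 | hN0
  · simp [hN0]
  · field_simp
    ring

end Matrix

theorem Real.sqrt_sub_inv_sq_le {x d : ℝ} (hd : 0 < d) (hx : x ≤ 1 / d) :
    √(x - (d ^ 2)⁻¹) ≤ √(d - 1) / d := calc
  √(x - (d ^ 2)⁻¹) ≤ √((d - 1) / d ^ 2) := by
    refine Real.sqrt_le_sqrt ?_
    rw [show (d - 1) / d ^ 2 = 1 / d - (d ^ 2)⁻¹ by field_simp]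
    linarith
  _ = √(d - 1) / d := by rw [Real.sqrt_div' _ (sq_nonneg d), Real.sqrt_sq hd.le]

theorem separable_LMM_purity_bound_general (d : ℕ) [NeZero d]
    (σ : Matrix (ZMod d × ZMod d) (ZMod d × ZMod d) ℂ)
    -- separability: a convex combination of pure product states
    (n : ℕ) (lam : Fin n → ℝ) (φ ψ : Fin n → ZMod d → ℂ)
    (hlam : ∀ α, 0 ≤ lam α)
    (hψ : ∀ α, ∑ s : ZMod d, ‖ψ α s‖ ^ 2 = 1)
    (hsep : σ = ∑ α, (lam α : ℂ) •
      Matrix.vecMulVec (fun p : ZMod d × ZMod d => φ α p.1 * ψ α p.2)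
        (star (fun p : ZMod d × ZMod d => φ α p.1 * ψ α p.2)))
    -- LMM: both partial traces are maximally mixed
    (hB : (fun a b => ∑ t : ZMod d, σ (a, t) (b, t))
      = ((d : ℂ))⁻¹ • (1 : Matrix (ZMod d) (ZMod d) ℂ)) :
    ((σ * σ).trace).re ≤ 1 / d ∧
    Real.sqrt ((((σ - ((d : ℂ) ^ 2)⁻¹ • 1)ᴴ * (σ - ((d : ℂ) ^ 2)⁻¹ • 1)).trace).re)
      ≤ Real.sqrt (d - 1) / d := by
  have hσ : σ = mixture lam fun α => prodVec (φ α) (ψ α) := hsep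
  have hρ : traceRight σ = (d : ℂ)⁻¹ • 1 := hB
  have hpurity : ((σ * σ).trace).re ≤ 1 / d := calc
    ((σ * σ).trace).re ≤ ((mixture lam φ * mixture lam φ).trace).re :=
      hσ ▸ re_trace_mixture_prodVec_mul_self_le lam φ ψ hlam hψ
    _ = 1 / d := by
      rw [← traceRight_mixture_prodVec lam φ ψ hψ, ← hσ, hρ]
      simp [smul_smul, ZMod.card]
      field_simp
  have htrace : σ.trace = 1 := by
    rw [← trace_traceRight, hρ]
    simp [ZMod.card]
  have hcard : ((d : ℂ) ^ 2)⁻¹ = (Fintype.card (ZMod d × ZMod d) : ℂ)⁻¹ := by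
    simp [sq, ZMod.card]
  have hre : ((σ * σ).trace - ((d : ℂ) ^ 2)⁻¹).re = ((σ * σ).trace).re - ((d : ℝ) ^ 2)⁻¹ := by
    rw [Complex.sub_re, ← Complex.ofReal_natCast, ← Complex.ofReal_pow, ← Complex.ofReal_inv,
      Complex.ofReal_re]
  rw [hcard, trace_conjTranspose_sub_inv_card_smul_one_mul (hσ ▸ isHermitian_mixture _ _) htrace,
    ← hcard, hre]
  exact ⟨hpurity, Real.sqrt_sub_inv_sq_le (Nat.cast_pos.mpr (NeZero.pos d)) hpurity⟩

/-- A separable LMM density matrix `σ` on `ℂ^d ⊗ ℂ^d` satisfies `Tr σ² ≤ 1/d`;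
equivalently its Hilbert–Schmidt distance to the maximally mixed state `ω = 𝟙/d²`
is at most `√(d-1)/d`. -/
theorem separable_LMM_purity_bound (d : ℕ) [NeZero d]
    (σ : Matrix (ZMod d × ZMod d) (ZMod d × ZMod d) ℂ)
    -- separability: a convex combination of pure product states
    (n : ℕ) (lam : Fin n → ℝ) (φ ψ : Fin n → ZMod d → ℂ)
    (hlam : ∀ α, 0 ≤ lam α) (hsum : ∑ α, lam α = 1)
    (hφ : ∀ α, ∑ s : ZMod d, ‖φ α s‖ ^ 2 = 1) (hψ : ∀ α, ∑ s : ZMod d, ‖ψ α s‖ ^ 2 = 1)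
    (hsep : σ = ∑ α, (lam α : ℂ) •
      Matrix.vecMulVec (fun p : ZMod d × ZMod d => φ α p.1 * ψ α p.2)
        (star (fun p : ZMod d × ZMod d => φ α p.1 * ψ α p.2)))
    -- LMM: both partial traces are maximally mixed
    (hB : (fun a b => ∑ t : ZMod d, σ (a, t) (b, t))
      = ((d : ℂ))⁻¹ • (1 : Matrix (ZMod d) (ZMod d) ℂ))
    (hA : (fun a b => ∑ s : ZMod d, σ (s, a) (s, b))
      = ((d : ℂ))⁻¹ • (1 : Matrix (ZMod d) (ZMod d) ℂ)) :
    ((σ * σ).trace).re ≤ 1 / d ∧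
    Real.sqrt ((((σ - ((d : ℂ) ^ 2)⁻¹ • 1)ᴴ * (σ - ((d : ℂ) ^ 2)⁻¹ • 1)).trace).re)
      ≤ Real.sqrt (d - 1) / d :=
  separable_LMM_purity_bound_general d σ n lam φ ψ hlam hψ hsep hB
end

section
/- If U is a unitary on ℂ^d with U^b = 𝟙 for some b ≥ 1 and Tr U^n = 0 for all 1 ≤ n ≤ b−1, then b divides d, every eigenvalue of U is a b-th root of unity, and each b-th root of unity e^{2πim/b} (0 ≤ m ≤ b−1) occurs as an eigenvalue with multiplicity exactly d/b. -/
open Matrix Complex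

private lemma trace_toLin'_aux {d : ℕ} (A : Matrix (Fin d) (Fin d) ℂ) :
    LinearMap.trace ℂ (Fin d → ℂ) (Matrix.toLin' A) = A.trace := by
  rw [LinearMap.trace_eq_matrix_trace ℂ (Pi.basisFun ℂ (Fin d)),
    LinearMap.toMatrix_eq_toMatrix', LinearMap.toMatrix'_toLin']

private lemma toLin'_pow_aux {d : ℕ} (A : Matrix (Fin d) (Fin d) ℂ) (n : ℕ) :
    Matrix.toLin' (A ^ n) = (Matrix.toLin' A) ^ n := by
  induction n with
  | zero => simp [Matrix.toLin'_one]; rfl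
  | succ n ih =>
      rw [pow_succ, pow_succ, Matrix.toLin'_mul, ih]
      rfl

private lemma key_aux {d b : ℕ} (hb : 1 ≤ b) (U : Matrix (Fin d) (Fin d) ℂ)
    (hUb : U ^ b = 1) (htr : ∀ n : ℕ, 1 ≤ n → n ≤ b - 1 → (U ^ n).trace = 0) (m : ℕ) :
    b * Module.finrank ℂ
        (Module.End.eigenspace (Matrix.toLin' U)
          (Complex.exp (2 * Real.pi * Complex.I * m / b))) = d := by
  have hbC : (b : ℂ) ≠ 0 := Nat.cast_ne_zero.mpr (by omega)
  set ω : ℂ := Complex.exp (2 * Real.pi * Complex.I * m / b) with hωdef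
  have hω : ω ^ b = 1 := by
    rw [hωdef, ← Complex.exp_nat_mul]
    have h : (b : ℂ) * (2 * Real.pi * Complex.I * m / b) = (m : ℂ) * (2 * Real.pi * Complex.I) := by
      field_simp
    rw [h, Complex.exp_nat_mul_two_pi_mul_I]
  have hω0 : ω ≠ 0 := Complex.exp_ne_zero _
  set f : Module.End ℂ (Fin d → ℂ) := Matrix.toLin' U with hf
  have hfb : f ^ b = 1 := by
    rw [hf, ← toLin'_pow_aux, hUb, Matrix.toLin'_one]; rfl
  set g : Module.End ℂ (Fin d → ℂ) := ω⁻¹ • f with hg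
  have hgb : g ^ b = 1 := by
    rw [hg, smul_pow, hfb, inv_pow, hω, inv_one, one_smul]
  set Q : Module.End ℂ (Fin d → ℂ) := ∑ n ∈ Finset.range b, g ^ n with hQ
  have hgQ : g * Q = Q := by
    rw [hQ, Finset.mul_sum]
    simp_rw [← pow_succ']
    have h1 : ∑ n ∈ Finset.range (b + 1), g ^ n
        = (∑ n ∈ Finset.range b, g ^ (n + 1)) + g ^ 0 := Finset.sum_range_succ' _ b
    have h2 : ∑ n ∈ Finset.range (b + 1), g ^ n
        = (∑ n ∈ Finset.range b, g ^ n) + g ^ b := Finset.sum_range_succ _ b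
    rw [h1] at h2
    rw [hgb] at h2
    rw [pow_zero] at h2
    exact add_right_cancel h2
  set P : Module.End ℂ (Fin d → ℂ) := (b : ℂ)⁻¹ • Q with hP
  have hfg : f = ω • g := by rw [hg, smul_smul, mul_inv_cancel₀ hω0, one_smul]
  have hfP : f * P = ω • P := by
    rw [hP, mul_smul_comm, hfg, smul_mul_assoc, hgQ, smul_comm]
  have hmem : ∀ x, P x ∈ Module.End.eigenspace f ω := by
    intro x
    rw [Module.End.mem_eigenspace_iff]
    calc f (P x) = (f * P) x := rfl
    _ = (ω • P) x := by rw [hfP]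
    _ = ω • P x := rfl
  have hpow : ∀ x, f x = ω • x → ∀ n : ℕ, (f ^ n) x = ω ^ n • x := by
    intro x hx n
    induction n with
    | zero => simp
    | succ n ih =>
        rw [pow_succ', Module.End.mul_apply, ih, _root_.map_smul, hx, smul_smul, ← pow_succ]
  have hid : ∀ x ∈ Module.End.eigenspace f ω, P x = x := by
    intro x hx
    have hx' : f x = ω • x := Module.End.mem_eigenspace_iff.mp hx
    have hQx : Q x = (b : ℂ) • x := by
      rw [hQ, LinearMap.sum_apply]
      have hterm : ∀ n ∈ Finset.range b, (g ^ n) x = x := by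
        intro n _
        rw [hg, smul_pow, LinearMap.smul_apply, hpow x hx' n, smul_smul, inv_pow,
          inv_mul_cancel₀ (pow_ne_zero n hω0), one_smul]
      rw [Finset.sum_congr rfl hterm, Finset.sum_const, Finset.card_range,
        ← Nat.cast_smul_eq_nsmul ℂ]
    rw [hP, LinearMap.smul_apply, hQx, smul_smul, inv_mul_cancel₀ hbC, one_smul]
  have hproj : LinearMap.IsProj (Module.End.eigenspace f ω) P := ⟨hmem, hid⟩
  have htrP : LinearMap.trace ℂ (Fin d → ℂ) P
      = (Module.finrank ℂ (Module.End.eigenspace f ω) : ℂ) := hproj.trace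
  have htrP2 : LinearMap.trace ℂ (Fin d → ℂ) P = (d : ℂ) / b := by
    rw [hP, _root_.map_smul, hQ, map_sum]
    have hterm : ∀ n ∈ Finset.range b, LinearMap.trace ℂ (Fin d → ℂ) (g ^ n)
        = if n = 0 then (d : ℂ) else 0 := by
      intro n hn
      have hn' : n < b := Finset.mem_range.mp hn
      rw [hg, smul_pow, _root_.map_smul]
      rw [hf, ← toLin'_pow_aux, trace_toLin'_aux]
      rcases Nat.eq_zero_or_pos n with h0 | h0
      · subst h0
        simp [Matrix.trace_one]
      · rw [if_neg (by omega), htr n h0 (by omega), smul_zero]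
    rw [Finset.sum_congr rfl hterm, Finset.sum_ite_eq' (Finset.range b) 0 (fun _ => (d : ℂ))]
    rw [if_pos (Finset.mem_range.mpr (by omega))]
    rw [smul_eq_mul, inv_mul_eq_div]
  have hcast : ((b * Module.finrank ℂ (Module.End.eigenspace f ω) : ℕ) : ℂ) = (d : ℂ) := by
    push_cast
    rw [← htrP, htrP2]
    field_simp
  exact_mod_cast hcast

/-- If `U` is a `d×d` unitary with `U^b = 𝟙` and `Tr U^n = 0` for `1 ≤ n ≤ b-1`,
then `b ∣ d`, every eigenvalue of `U` is a `b`-th root of unity, and each `b`-th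
root of unity `e^{2πim/b}` is an eigenvalue of multiplicity exactly `d/b`. -/
theorem intertwiner_group_spectrum (d b : ℕ) (hd : 0 < d) (hb : 1 ≤ b)
    (U : Matrix (Fin d) (Fin d) ℂ) (hU : U ∈ Matrix.unitaryGroup (Fin d) ℂ)
    (hUb : U ^ b = 1) (htr : ∀ n : ℕ, 1 ≤ n → n ≤ b - 1 → (U ^ n).trace = 0) :
    b ∣ d ∧
    (∀ μ : ℂ, Module.End.HasEigenvalue (Matrix.toLin' U) μ → μ ^ b = 1) ∧
    (∀ m : ℕ, m ≤ b - 1 →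
      Module.finrank ℂ
        (Module.End.eigenspace (Matrix.toLin' U)
          (Complex.exp (2 * Real.pi * Complex.I * m / b))) = d / b) := by
  have hfb : (Matrix.toLin' U : Module.End ℂ (Fin d → ℂ)) ^ b = 1 := by
    rw [← toLin'_pow_aux, hUb, Matrix.toLin'_one]; rfl
  refine ⟨?_, ?_, ?_⟩
  · exact ⟨_, (key_aux hb U hUb htr 0).symm⟩
  · intro μ hμ
    obtain ⟨v, hv⟩ := hμ.exists_hasEigenvector
    have h1 : ((Matrix.toLin' U : Module.End ℂ (Fin d → ℂ)) ^ b) v = μ ^ b • v :=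
      hv.pow_apply b
    rw [hfb] at h1
    have h2 : (μ ^ b - 1) • v = 0 := by
      rw [sub_smul, one_smul, ← h1]
      simp
    rcases smul_eq_zero.mp h2 with h | h
    · exact sub_eq_zero.mp h
    · exact absurd h hv.2
  · intro m _
    have hkey := key_aux hb U hUb htr m
    exact (Nat.div_eq_of_eq_mul_left (by omega) (by rw [Nat.mul_comm]; exact hkey.symm)).symm
end

section
/- If U and V are commuting unitaries on ℂ^d with U^b = V^c = 𝟙 where b·c = d, and Tr(U^μ V^ν) = d·δ_{μ,0}δ_{ν,0} for all 0 ≤ μ ≤ b−1, 0 ≤ ν ≤ c−1, then there is an orthonormal basis {φ_{s,t}} (0 ≤ s ≤ b−1, 0 ≤ t ≤ c−1) with U φ_{s,t} = e^{2πis/b} φ_{s,t} and V φ_{s,t} = e^{2πit/c} φ_{s,t}; i.e., each joint eigenvalue pair (e^{2πis/b}, e^{2πit/c}) occurs with multiplicity exactly one. -/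
/-!
Averaging `U` against a character, `P_s = ∑_{μ<b} e^{-2πisμ/b} U^μ`, telescopes to
`U P_s = e^{2πis/b} P_s`; likewise `V Q_t = e^{2πit/c} Q_t`, and since `U, V` commute, every
column of `P_s Q_t` is a joint eigenvector. Expanding,
`Tr(P_s Q_t) = ∑ e^{…} Tr(U^μ V^ν) = Tr 1 = d`, so `P_s Q_t ≠ 0` and each pair `(s, t)` has a
unit joint eigenvector. Eigenvectors of a unitary for distinct eigenvalues are orthogonal, so these
`b c = d` vectors are orthonormal, hence a basis.
-/

open Matrix Complex

section EigenProj

variable {K A : Type*} [Field K] [Ring A] [Algebra K A]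

/-- For `a ^ n = 1` and `ζ ^ n = 1`, this is `n` times the projection onto the `ζ`-eigenspace
of `a`. -/
def eigenProj (n : ℕ) (a : A) (ζ : K) : A :=
  ∑ m ∈ Finset.range n, (ζ⁻¹ • a) ^ m

theorem mul_eigenProj {n : ℕ} {a : A} {ζ : K} (ha : a ^ n = 1) (hζ : ζ ^ n = 1) :
    a * eigenProj n a ζ = ζ • eigenProj n a ζ := by
  rcases eq_or_ne ζ 0 with rfl | hζ0
  · obtain rfl : n = 0 := by
      by_contra hn
      exact zero_ne_one ((zero_pow hn).symm.trans hζ)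
    simp [eigenProj]
  have hpow : (ζ⁻¹ • a) ^ n = 1 := by rw [smul_pow, ha, inv_pow, hζ, inv_one, one_smul]
  have hfix : (ζ⁻¹ • a) * eigenProj n a ζ = eigenProj n a ζ := by
    have := mul_geom_sum (ζ⁻¹ • a) n
    rwa [hpow, sub_self, sub_mul, one_mul, sub_eq_zero] at this
  calc a * eigenProj n a ζ = ζ • ((ζ⁻¹ • a) * eigenProj n a ζ) := by
        rw [smul_mul_assoc, smul_inv_smul₀ hζ0]
    _ = ζ • eigenProj n a ζ := by rw [hfix]

theorem Commute.eigenProj_right {a b : A} (h : Commute b a) (n : ℕ) (ζ : K) :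
    Commute b (eigenProj n a ζ) :=
  Commute.sum_right _ _ _ fun m _ => (h.smul_right ζ⁻¹).pow_right m

end EigenProj

theorem ContinuousLinearMap.inner_eq_zero_of_mem_unitary {𝕜 H : Type*} [RCLike 𝕜]
    [NormedAddCommGroup H] [InnerProductSpace 𝕜 H] [CompleteSpace H] {u : H →L[𝕜] H}
    (hu : u ∈ unitary (H →L[𝕜] H)) {x y : H} {α β : 𝕜} (hx : u x = α • x) (hy : u y = β • y)
    (hx0 : x ≠ 0) (hαβ : α ≠ β) : inner 𝕜 x y = 0 := by
  have hα : ‖α‖ = 1 := by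
    have := norm_map_of_mem_unitary hu x
    rw [hx, norm_smul] at this
    exact (mul_eq_right₀ (norm_ne_zero_iff.2 hx0)).1 this
  have hinner : inner 𝕜 x y = (starRingEnd 𝕜 α * β) * inner 𝕜 x y := calc
    inner 𝕜 x y = inner 𝕜 (u x) (u y) := (inner_map_map_of_mem_unitary hu x y).symm
    _ = _ := by rw [hx, hy, inner_smul_left, inner_smul_right, mul_assoc]
  by_contra hxy
  have hconj : starRingEnd 𝕜 α * β = 1 := (mul_eq_right₀ hxy).1 hinner.symm
  apply hαβ
  calc α = α * (starRingEnd 𝕜 α * β) := by rw [hconj, mul_one]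
    _ = β := by rw [← mul_assoc, RCLike.mul_conj, hα]; simp

namespace Matrix

variable {ι : Type*} [Fintype ι] [DecidableEq ι]

section Field

variable {K : Type*} [Field K]

theorem trace_eigenProj_mul_eigenProj {U V : Matrix ι ι K} {n m : ℕ} (hn : 0 < n) (hm : 0 < m)
    {α β : K} (t : K)
    (htr : ∀ μ < n, ∀ ν < m, trace (U ^ μ * V ^ ν) = if μ = 0 ∧ ν = 0 then t else 0) :
    trace (eigenProj n U α * eigenProj m V β) = t := by
  simp only [eigenProj, Finset.sum_mul_sum, smul_pow, smul_mul_smul_comm, trace_sum, trace_smul,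
    smul_eq_mul]
  rw [Finset.sum_congr rfl fun μ hμ => Finset.sum_congr rfl fun ν hν =>
    by rw [htr μ (Finset.mem_range.1 hμ) ν (Finset.mem_range.1 hν)]]
  simp [ite_and, hn, hm]

theorem exists_joint_eigenvector {U V : Matrix ι ι K} {n m : ℕ} {α β : K} (hUV : Commute U V)
    (hU : U ^ n = 1) (hV : V ^ m = 1) (hα : α ^ n = 1) (hβ : β ^ m = 1)
    (htr : trace (eigenProj n U α * eigenProj m V β) ≠ 0) :
    ∃ v : ι → K, v ≠ 0 ∧ U *ᵥ v = α • v ∧ V *ᵥ v = β • v := by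
  set P := eigenProj n U α * eigenProj m V β
  have hUP : U * P = α • P := by rw [← mul_assoc, mul_eigenProj hU hα, smul_mul_assoc]
  have hVP : V * P = β • P := by
    rw [← mul_assoc, (hUV.symm.eigenProj_right n α).eq, mul_assoc, mul_eigenProj hV hβ,
      mul_smul_comm]
  obtain ⟨j, hj⟩ : ∃ j, P *ᵥ Pi.single j 1 ≠ 0 := by
    by_contra! h
    refine htr ?_
    rw [show P = 0 from ext_of_mulVec_single fun j => by rw [h j, zero_mulVec], trace_zero]
  exact ⟨P *ᵥ Pi.single j 1, hj, by rw [mulVec_mulVec, hUP, smul_mulVec],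
    by rw [mulVec_mulVec, hVP, smul_mulVec]⟩

end Field

section RCLike

variable {𝕜 : Type*} [RCLike 𝕜]

theorem inner_eq_zero_of_mem_unitaryGroup {U : Matrix ι ι 𝕜} (hU : U ∈ unitaryGroup ι 𝕜)
    {x y : EuclideanSpace 𝕜 ι} {α β : 𝕜} (hx : U *ᵥ x = α • x) (hy : U *ᵥ y = β • y)
    (hx0 : x ≠ 0) (hαβ : α ≠ β) :
    inner 𝕜 x y = 0 :=
  ContinuousLinearMap.inner_eq_zero_of_mem_unitary
    (Unitary.map_mem (toEuclideanCLM (n := ι) (𝕜 := 𝕜)) hU)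
    (WithLp.ofLp_injective 2 hx) (WithLp.ofLp_injective 2 hy) hx0 hαβ

theorem exists_norm_eq_one_joint_eigenvector {U V : Matrix ι ι 𝕜} {n m : ℕ} {α β : 𝕜}
    (hUV : Commute U V) (hU : U ^ n = 1) (hV : V ^ m = 1) (hα : α ^ n = 1) (hβ : β ^ m = 1)
    (htr : trace (eigenProj n U α * eigenProj m V β) ≠ 0) :
    ∃ x : EuclideanSpace 𝕜 ι, ‖x‖ = 1 ∧ U *ᵥ x = α • x ∧ V *ᵥ x = β • x := by
  obtain ⟨v, hv0, hUv, hVv⟩ := exists_joint_eigenvector hUV hU hV hα hβ htr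
  have hx0 : WithLp.toLp 2 v ≠ 0 := by simpa using hv0
  refine ⟨(‖WithLp.toLp 2 v‖⁻¹ : 𝕜) • WithLp.toLp 2 v, norm_smul_inv_norm hx0, ?_, ?_⟩
  · rw [WithLp.ofLp_smul, WithLp.ofLp_toLp, mulVec_smul, hUv, smul_comm]
  · rw [WithLp.ofLp_smul, WithLp.ofLp_toLp, mulVec_smul, hVv, smul_comm]

theorem orthonormal_of_joint_eigenvectors {S T : Type*} {U V : Matrix ι ι 𝕜}
    (hU : U ∈ unitaryGroup ι 𝕜) (hV : V ∈ unitaryGroup ι 𝕜)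
    {α : S → 𝕜} {β : T → 𝕜} (hα : Function.Injective α) (hβ : Function.Injective β)
    {φ : S × T → EuclideanSpace 𝕜 ι} (hφ1 : ∀ p, ‖φ p‖ = 1)
    (hφU : ∀ p, U *ᵥ φ p = α p.1 • φ p) (hφV : ∀ p, V *ᵥ φ p = β p.2 • φ p) :
    Orthonormal 𝕜 φ := by
  have hφ0 (p) : φ p ≠ 0 := ne_zero_of_norm_ne_zero (by rw [hφ1]; exact one_ne_zero)
  refine ⟨hφ1, ?_⟩
  rintro ⟨s, t⟩ ⟨s', t'⟩ hne
  by_cases hs : s = s'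
  · subst hs
    have ht : t ≠ t' := fun h => hne (by rw [h])
    exact inner_eq_zero_of_mem_unitaryGroup hV (hφV _) (hφV _) (hφ0 _) (hβ.ne ht)
  · exact inner_eq_zero_of_mem_unitaryGroup hU (hφU _) (hφU _) (hφ0 _) (hα.ne hs)

end RCLike

end Matrix

namespace Complex

theorem exp_two_pi_mul_I_mul_div_pow_self (k n : ℕ) : exp (2 * Real.pi * I * k / n) ^ n = 1 := by
  rcases eq_or_ne n 0 with rfl | hn
  · simp
  rw [← exp_nat_mul, ← exp_nat_mul_two_pi_mul_I k]
  congr 1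
  field_simp

theorem injective_exp_two_pi_mul_I_mul_div (n : ℕ) :
    Function.Injective fun k : Fin n => exp (2 * Real.pi * I * k / n) := by
  intro k l hkl
  have hpow (j : ℕ) : exp (2 * Real.pi * I * j / n) = exp (2 * Real.pi * I / n) ^ j := by
    rw [← exp_nat_mul]; ring_nf
  simp only [hpow] at hkl
  exact Fin.ext ((isPrimitiveRoot_exp n k.pos.ne').pow_inj k.isLt l.isLt hkl)

end Complex

theorem commuting_intertwiners_joint_basis_general (d b c : ℕ)
    (hbc : b * c = d)
    (U V : Matrix (Fin d) (Fin d) ℂ)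
    (hU : U ∈ Matrix.unitaryGroup (Fin d) ℂ) (hV : V ∈ Matrix.unitaryGroup (Fin d) ℂ)
    (hcomm : U * V = V * U) (hUb : U ^ b = 1) (hVc : V ^ c = 1)
    (htr : ∀ μ ν : ℕ, μ ≤ b - 1 → ν ≤ c - 1 →
      (U ^ μ * V ^ ν).trace = if μ = 0 ∧ ν = 0 then (d : ℂ) else 0) :
    ∃ φ : Fin b × Fin c → EuclideanSpace ℂ (Fin d),
      Orthonormal ℂ φ ∧
      Submodule.span ℂ (Set.range φ) = ⊤ ∧
      ∀ s : Fin b, ∀ t : Fin c,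
        U *ᵥ φ (s, t) = Complex.exp (2 * Real.pi * Complex.I * s / b) • φ (s, t) ∧
        V *ᵥ φ (s, t) = Complex.exp (2 * Real.pi * Complex.I * t / c) • φ (s, t) := by
  have hunit : ∀ p : Fin b × Fin c, ∃ x : EuclideanSpace ℂ (Fin d), ‖x‖ = 1 ∧
      U *ᵥ x = Complex.exp (2 * Real.pi * Complex.I * p.1 / b) • x ∧
      V *ᵥ x = Complex.exp (2 * Real.pi * Complex.I * p.2 / c) • x := by
    rintro ⟨s, t⟩
    have hd : (d : ℂ) ≠ 0 := by
      rw [← hbc]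
      exact_mod_cast (Nat.mul_pos s.pos t.pos).ne'
    refine exists_norm_eq_one_joint_eigenvector hcomm hUb hVc
      (exp_two_pi_mul_I_mul_div_pow_self s b) (exp_two_pi_mul_I_mul_div_pow_self t c) ?_
    rwa [trace_eigenProj_mul_eigenProj s.pos t.pos _ fun μ hμ ν hν =>
      htr μ ν (by omega) (by omega)]
  choose φ hφ1 hφU hφV using hunit
  have horth : Orthonormal ℂ φ := orthonormal_of_joint_eigenvectors hU hV
    (injective_exp_two_pi_mul_I_mul_div b) (injective_exp_two_pi_mul_I_mul_div c) hφ1 hφU hφV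
  refine ⟨φ, horth, ?_, fun s t => ⟨hφU (s, t), hφV (s, t)⟩⟩
  exact horth.linearIndependent.span_eq_top_of_card_eq_finrank' (by simp [hbc])

/-- If `U, V` are commuting `d×d` unitaries with `U^b = V^c = 𝟙`, `b·c = d`, and
`Tr(U^μ V^ν) = d·δ_{μ0}δ_{ν0}` for `0 ≤ μ < b`, `0 ≤ ν < c`, then there is an
orthonormal basis `{φ_{s,t}}` of joint eigenvectors with `U φ_{s,t} = e^{2πis/b} φ_{s,t}`
and `V φ_{s,t} = e^{2πit/c} φ_{s,t}`, each joint eigenvalue pair occurring exactly once. -/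
theorem commuting_intertwiners_joint_basis (d b c : ℕ) (hb : 0 < b) (hc : 0 < c)
    (hbc : b * c = d)
    (U V : Matrix (Fin d) (Fin d) ℂ)
    (hU : U ∈ Matrix.unitaryGroup (Fin d) ℂ) (hV : V ∈ Matrix.unitaryGroup (Fin d) ℂ)
    (hcomm : U * V = V * U) (hUb : U ^ b = 1) (hVc : V ^ c = 1)
    (htr : ∀ μ ν : ℕ, μ ≤ b - 1 → ν ≤ c - 1 →
      (U ^ μ * V ^ ν).trace = if μ = 0 ∧ ν = 0 then (d : ℂ) else 0) :
    ∃ φ : Fin b × Fin c → EuclideanSpace ℂ (Fin d),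
      Orthonormal ℂ φ ∧
      Submodule.span ℂ (Set.range φ) = ⊤ ∧
      ∀ s : Fin b, ∀ t : Fin c,
        U *ᵥ φ (s, t) = Complex.exp (2 * Real.pi * Complex.I * s / b) • φ (s, t) ∧
        V *ᵥ φ (s, t) = Complex.exp (2 * Real.pi * Complex.I * t / c) • φ (s, t) :=
  commuting_intertwiners_joint_basis_general d b c hbc U V hU hV hcomm hUb hVc htr
end

section
/- The number of subgroups of order d in the group (ℤ/dℤ) × (ℤ/dℤ) equals Σ_{b | d} b (the sum of all divisors of d, i.e., σ(d)). -/
open AddSubgroup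

variable {d : ℕ}

lemma aux_mem_zmultiples (hd : 0 < d) {b : ℕ} (hb : b ∣ d) (hb0 : 0 < b)
    {x : ZMod d} (hx : (b : ZMod d) * x = 0) :
    x ∈ zmultiples ((d / b : ℕ) : ZMod d) := by
  haveI : NeZero d := ⟨hd.ne'⟩
  have h1 : ((b * x.val : ℕ) : ZMod d) = 0 := by
    push_cast
    rwa [ZMod.natCast_zmod_val]
  rw [ZMod.natCast_eq_zero_iff] at h1
  have hbc : b * (d / b) = d := Nat.mul_div_cancel' hb
  have h2 : (d / b) ∣ x.val := by
    have h1' : b * (d / b) ∣ b * x.val := hbc.symm ▸ h1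
    exact (Nat.mul_dvd_mul_iff_left hb0).mp h1'
  obtain ⟨m, hm⟩ := h2
  refine ⟨(m : ℤ), ?_⟩
  have : x = ((d / b * m : ℕ) : ZMod d) := by rw [← hm, ZMod.natCast_zmod_val]
  rw [this]
  push_cast
  rw [zsmul_eq_mul]
  push_cast
  ring

lemma aux_subgroup_eq (hd : 0 < d) (H : AddSubgroup (ZMod d)) :
    H = zmultiples ((d / Nat.card H : ℕ) : ZMod d) := by
  haveI : NeZero d := ⟨hd.ne'⟩
  set b := Nat.card H with hbdef
  have hb : b ∣ d := by
    have := AddSubgroup.card_addSubgroup_dvd_card H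
    rwa [Nat.card_zmod] at this
  have hb0 : 0 < b := Nat.card_pos
  have hle : H ≤ zmultiples ((d / b : ℕ) : ZMod d) := by
    intro x hx
    apply aux_mem_zmultiples hd hb hb0
    have h0 : b • (⟨x, hx⟩ : H) = 0 := card_nsmul_eq_zero'
    have : ((b • (⟨x, hx⟩ : H) : H) : ZMod d) = b • x := rfl
    rw [h0] at this
    rw [← nsmul_eq_mul]
    exact this.symm ▸ rfl
  have hcard : Nat.card (zmultiples ((d / b : ℕ) : ZMod d)) = b := by
    rw [Nat.card_zmultiples, ZMod.addOrderOf_coe _ hd.ne',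
      Nat.gcd_eq_right (Nat.div_dvd_of_dvd hb), Nat.div_div_self hb hd.ne']
  exact AddSubgroup.eq_of_le_of_card_ge hle hcard.le

open AddSubgroup

variable {d : ℕ}

/-- The homomorphism whose kernel is our parametrized subgroup. -/
def auxPsi (d a t : ℕ) : (ZMod d × ZMod d) →+ (ZMod d × ZMod d) :=
  AddMonoidHom.mk' (fun p => ((a : ZMod d) * p.1, ((d / a : ℕ) : ZMod d) * p.2 - (t : ZMod d) * p.1))
    (by intro p q; ext <;> simp <;> ring)

def auxF (d a t : ℕ) : AddSubgroup (ZMod d × ZMod d) := (auxPsi d a t).ker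

lemma aux_mem_F {a t : ℕ} {p : ZMod d × ZMod d} :
    p ∈ auxF d a t ↔ (a : ZMod d) * p.1 = 0 ∧ ((d / a : ℕ) : ZMod d) * p.2 = (t : ZMod d) * p.1 := by
  simp [auxF, auxPsi, AddMonoidHom.mem_ker, Prod.ext_iff, sub_eq_zero, AddMonoidHom.mk'_apply]

lemma aux_card_ker_mul_range {α β : Type*} [AddGroup α] [AddGroup β] (f : α →+ β) :
    Nat.card α = Nat.card f.ker * Nat.card f.range := by
  rw [AddSubgroup.card_eq_card_quotient_mul_card_addSubgroup f.ker, mul_comm]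
  congr 1
  exact Nat.card_congr (QuotientAddGroup.quotientKerEquivRange f).toEquiv

/-- For a subgroup `H` of a product, the kernel of `fst` restricted to `H` is
equivalent to the "second-axis" part of `H`. -/
def auxKerEquiv (H : AddSubgroup (ZMod d × ZMod d)) :
    ((AddMonoidHom.fst (ZMod d) (ZMod d)).comp H.subtype).ker ≃
      (H.comap (AddMonoidHom.inr (ZMod d) (ZMod d))) where
  toFun x := ⟨(x.1 : ZMod d × ZMod d).2, by
    have h1 : (x.1 : ZMod d × ZMod d).1 = 0 := x.2
    have h2 : ((x.1 : ZMod d × ZMod d).1, (x.1 : ZMod d × ZMod d).2) ∈ H := x.1.2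
    rw [h1] at h2
    simpa [AddSubgroup.mem_comap] using h2⟩
  invFun y := ⟨⟨(0, (y : ZMod d)), AddSubgroup.mem_comap.mp y.2⟩, rfl⟩
  left_inv x := by
    ext
    · exact (x.2 : (x.1 : ZMod d × ZMod d).1 = 0).symm
    · rfl
  right_inv y := rfl

lemma aux_range_fst (H : AddSubgroup (ZMod d × ZMod d)) :
    ((AddMonoidHom.fst (ZMod d) (ZMod d)).comp H.subtype).range =
      H.map (AddMonoidHom.fst (ZMod d) (ZMod d)) := by
  rw [AddMonoidHom.range_comp, AddSubgroup.range_subtype]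

lemma aux_comap_inr_F (hd : 0 < d) {a : ℕ} (ha : a ∣ d) (t : ℕ) :
    (auxF d a t).comap (AddMonoidHom.inr (ZMod d) (ZMod d)) =
      zmultiples ((a : ℕ) : ZMod d) := by
  haveI : NeZero d := ⟨hd.ne'⟩
  have ha0 : 0 < a := Nat.pos_of_dvd_of_pos ha hd
  have hc : (d / a) ∣ d := Nat.div_dvd_of_dvd ha
  have hc0 : 0 < d / a := Nat.div_pos (Nat.le_of_dvd hd ha) ha0
  have hca : d / a * a = d := Nat.div_mul_cancel ha
  apply le_antisymm
  · intro y hy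
    simp only [AddSubgroup.mem_comap, AddMonoidHom.inr_apply, aux_mem_F] at hy
    have h1 : ((d / a : ℕ) : ZMod d) * y = 0 := by
      have := hy.2; simpa using this
    have := aux_mem_zmultiples hd hc hc0 h1
    rwa [Nat.div_div_self ha hd.ne'] at this
  · rw [zmultiples_le]
    simp only [AddSubgroup.mem_comap, AddMonoidHom.inr_apply, aux_mem_F]
    constructor
    · simp
    · simp only [mul_zero]
      rw [← Nat.cast_mul, hca, ZMod.natCast_self]
lemma aux_card_zmultiples (hd : 0 < d) {b : ℕ} (hb : b ∣ d) :
    Nat.card (zmultiples ((b : ℕ) : ZMod d)) = d / b := by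
  rw [Nat.card_zmultiples, ZMod.addOrderOf_coe _ hd.ne', Nat.gcd_eq_right hb]

lemma aux_card_F (hd : 0 < d) {a : ℕ} (ha : a ∣ d) (t : ℕ) :
    Nat.card (auxF d a t) = d := by
  haveI : NeZero d := ⟨hd.ne'⟩
  have ha0 : 0 < a := Nat.pos_of_dvd_of_pos ha hd
  have hc : (d / a) ∣ d := Nat.div_dvd_of_dvd ha
  have hac : a * (d / a) = d := Nat.mul_div_cancel' ha
  set f := (AddMonoidHom.fst (ZMod d) (ZMod d)).comp (auxF d a t).subtype with hf
  have hrange : f.range = zmultiples ((d / a : ℕ) : ZMod d) := by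
    apply le_antisymm
    · rintro x ⟨⟨p, hp⟩, rfl⟩
      exact aux_mem_zmultiples hd ha ha0 (aux_mem_F.mp hp).1
    · rw [zmultiples_le]
      refine ⟨⟨(((d / a : ℕ) : ZMod d), (t : ZMod d)), aux_mem_F.mpr ⟨?_, ?_⟩⟩, rfl⟩
      · rw [← Nat.cast_mul, hac, ZMod.natCast_self]
      · ring
  have hker : Nat.card f.ker = d / a := by
    rw [Nat.card_congr (auxKerEquiv (auxF d a t)), aux_comap_inr_F hd ha t,
      aux_card_zmultiples hd ha]
  have := aux_card_ker_mul_range f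
  rw [hker, hrange, aux_card_zmultiples hd hc, Nat.div_div_self ha hd.ne'] at this
  rw [this, Nat.div_mul_cancel ha]
lemma aux_F_inj (hd : 0 < d) {a₁ a₂ t₁ t₂ : ℕ} (ha₁ : a₁ ∣ d) (ha₂ : a₂ ∣ d)
    (ht₁ : t₁ < a₁) (ht₂ : t₂ < a₂) (h : auxF d a₁ t₁ = auxF d a₂ t₂) :
    a₁ = a₂ ∧ t₁ = t₂ := by
  haveI : NeZero d := ⟨hd.ne'⟩
  have hcomap := congrArg (fun H : AddSubgroup (ZMod d × ZMod d) =>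
    H.comap (AddMonoidHom.inr (ZMod d) (ZMod d))) h
  simp only [aux_comap_inr_F hd ha₁, aux_comap_inr_F hd ha₂] at hcomap
  have hcards : d / a₁ = d / a₂ := by
    have := congrArg (fun H : AddSubgroup (ZMod d) => Nat.card H) hcomap
    rwa [aux_card_zmultiples hd ha₁, aux_card_zmultiples hd ha₂] at this
  have haa : a₁ = a₂ := by
    rw [← Nat.div_div_self ha₁ hd.ne', hcards, Nat.div_div_self ha₂ hd.ne']
  subst haa
  refine ⟨rfl, ?_⟩
  set a := a₁
  set c := d / a with hcdef
  have ha0 : 0 < a := Nat.pos_of_dvd_of_pos ha₁ hd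
  have hc0 : 0 < c := Nat.div_pos (Nat.le_of_dvd hd ha₁) ha0
  have hmem : (((c : ℕ) : ZMod d), (t₁ : ZMod d)) ∈ auxF d a t₁ := by
    refine aux_mem_F.mpr ⟨?_, by ring⟩
    rw [← Nat.cast_mul, Nat.mul_div_cancel' ha₁, ZMod.natCast_self]
  rw [h] at hmem
  have hm2 := (aux_mem_F.mp hmem).2
  have : ((c * t₁ : ℕ) : ZMod d) = ((c * t₂ : ℕ) : ZMod d) := by
    push_cast
    rw [hm2]; ring
  rw [ZMod.natCast_eq_natCast_iff] at this
  have hmod : t₁ ≡ t₂ [MOD d / Nat.gcd d c] := Nat.ModEq.cancel_left_div_gcd hd this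
  rw [Nat.gcd_eq_right (Nat.div_dvd_of_dvd ha₁), Nat.div_div_self ha₁ hd.ne'] at hmod
  have hmm : t₁ % a = t₂ % a := hmod
  rwa [Nat.mod_eq_of_lt ht₁, Nat.mod_eq_of_lt ht₂] at hmm
lemma aux_F_surj (hd : 0 < d) (H : AddSubgroup (ZMod d × ZMod d)) (hH : Nat.card H = d) :
    ∃ a t : ℕ, a ∣ d ∧ t < a ∧ H = auxF d a t := by
  haveI : NeZero d := ⟨hd.ne'⟩
  set f := (AddMonoidHom.fst (ZMod d) (ZMod d)).comp H.subtype with hf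
  set A := H.map (AddMonoidHom.fst (ZMod d) (ZMod d)) with hA
  set B := H.comap (AddMonoidHom.inr (ZMod d) (ZMod d)) with hB
  set a := Nat.card A with ha_def
  set b := Nat.card B with hb_def
  have hd_eq : d = b * a := by
    have h0 := aux_card_ker_mul_range f
    rw [Nat.card_congr (auxKerEquiv H), aux_range_fst H] at h0
    rw [← hH]
    exact h0
  have ha0 : 0 < a := Nat.card_pos
  have hb0 : 0 < b := Nat.card_pos
  have ha : a ∣ d := ⟨b, by rw [hd_eq, mul_comm]⟩
  have hda : d / a = b := by rw [hd_eq, Nat.mul_div_cancel _ ha0]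
  have hdb : d / b = a := by rw [hd_eq, Nat.mul_div_cancel_left _ hb0]
  set c := d / a with hc_def
  have hAz : A = zmultiples ((c : ℕ) : ZMod d) := aux_subgroup_eq hd A
  have hBz : B = zmultiples ((a : ℕ) : ZMod d) := by
    have h1 := aux_subgroup_eq hd B
    rwa [hdb] at h1
  have hcA : ((c : ℕ) : ZMod d) ∈ A := hAz ▸ mem_zmultiples _
  obtain ⟨p, hpH, hp1⟩ := hcA
  set y := p.2 with hy_def
  have hy : (((c : ℕ) : ZMod d), y) ∈ H := by
    have : (((c : ℕ) : ZMod d), y) = p := Prod.ext hp1.symm rfl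
    rwa [this]
  set t := y.val % a with ht_def
  have hta : t < a := Nat.mod_lt _ ha0
  have hkey : ((c : ℕ) : ZMod d) * y = ((c * t : ℕ) : ZMod d) := by
    conv_lhs => rw [← ZMod.natCast_zmod_val y]
    rw [← Nat.cast_mul, ZMod.natCast_eq_natCast_iff]
    have hsplit : c * y.val = c * t + d * (y.val / a) := by
      rw [ht_def]
      have h5 : y.val % a + a * (y.val / a) = y.val := Nat.mod_add_div y.val a
      have h6 : c * a = d := Nat.div_mul_cancel ha
      calc c * y.val = c * (y.val % a + a * (y.val / a)) := by rw [h5]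
        _ = c * (y.val % a) + (c * a) * (y.val / a) := by ring
        _ = c * (y.val % a) + d * (y.val / a) := by rw [h6]
    rw [hsplit]
    show (c * t + d * (y.val / a)) % d = c * t % d
    exact Nat.add_mul_mod_self_left _ _ _
  refine ⟨a, t, ha, hta, ?_⟩
  have hle : H ≤ auxF d a t := by
    rintro ⟨x, y₀⟩ hxy
    have hxA : x ∈ A := ⟨(x, y₀), hxy, rfl⟩
    rw [hAz, AddSubgroup.mem_zmultiples_iff] at hxA
    obtain ⟨m, hm⟩ := hxA
    rw [zsmul_eq_mul] at hm
    have hac0 : ((a * c : ℕ) : ZMod d) = 0 := by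
      rw [Nat.mul_div_cancel' ha, ZMod.natCast_self]
    have hca0 : ((c * a : ℕ) : ZMod d) = 0 := by
      rw [Nat.div_mul_cancel ha, ZMod.natCast_self]
    refine aux_mem_F.mpr ⟨?_, ?_⟩
    · show (a : ZMod d) * x = 0
      rw [← hm]
      push_cast at hac0 ⊢
      linear_combination (m : ZMod d) * hac0
    · show ((c : ℕ) : ZMod d) * y₀ = (t : ZMod d) * x
      have h2 : (x, y₀) - m • (((c : ℕ) : ZMod d), y) ∈ H := sub_mem hxy (zsmul_mem hy m)
      have hx0 : x - m • ((c : ℕ) : ZMod d) = 0 := by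
        rw [zsmul_eq_mul]
        exact sub_eq_zero.mpr hm.symm
      have h3 : ((0 : ZMod d), y₀ - m • y) ∈ H := by
        have heq : (x, y₀) - m • (((c : ℕ) : ZMod d), y)
            = ((0 : ZMod d), y₀ - m • y) := by
          rw [Prod.smul_def, Prod.mk_sub_mk, hx0]
        rwa [heq] at h2
      have h4 : y₀ - m • y ∈ B := AddSubgroup.mem_comap.mpr h3
      rw [hBz, AddSubgroup.mem_zmultiples_iff] at h4
      obtain ⟨k, hk⟩ := h4
      rw [zsmul_eq_mul, zsmul_eq_mul] at hk
      push_cast at hkey hca0 hk hm ⊢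
      linear_combination (-((c : ℕ) : ZMod d)) * hk + (m : ZMod d) * hkey
        + (t : ZMod d) * hm + (k : ZMod d) * hca0
  have hcard2 : Nat.card (auxF d a t) ≤ Nat.card H := by
    rw [hH, aux_card_F hd ha t]
  exact AddSubgroup.eq_of_le_of_card_ge hle hcard2
/-- The number of subgroups of order `d` in `(ℤ/dℤ) × (ℤ/dℤ)` equals `σ(d)`,
the sum of all divisors of `d`. -/
theorem card_order_d_subgroups (d : ℕ) (hd : 0 < d) :
    Nat.card {H : AddSubgroup (ZMod d × ZMod d) // Nat.card H = d} =
      ∑ b ∈ Nat.divisors d, b := by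
  haveI : NeZero d := ⟨hd.ne'⟩
  haveI inst : ∀ x : d.divisors, NeZero (x.1 : ℕ) :=
    fun x => ⟨(Nat.pos_of_mem_divisors x.2).ne'⟩
  let e : ((x : d.divisors) × ZMod (x.1 : ℕ)) →
      {H : AddSubgroup (ZMod d × ZMod d) // Nat.card H = d} :=
    fun p => ⟨auxF d p.1.1 p.2.val, aux_card_F hd (Nat.dvd_of_mem_divisors p.1.2) _⟩
  have hbij : Function.Bijective e := by
    constructor
    · rintro ⟨⟨a₁, ha₁⟩, t₁⟩ ⟨⟨a₂, ha₂⟩, t₂⟩ h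
      have h' : auxF d a₁ t₁.val = auxF d a₂ t₂.val := congrArg Subtype.val h
      obtain ⟨haa, htt⟩ := aux_F_inj hd (Nat.dvd_of_mem_divisors ha₁)
        (Nat.dvd_of_mem_divisors ha₂) (ZMod.val_lt t₁) (ZMod.val_lt t₂) h'
      subst haa
      have ht : t₁ = t₂ := ZMod.val_injective _ htt
      subst ht
      rfl
    · rintro ⟨H, hH⟩
      obtain ⟨a, t, ha, hta, hEq⟩ := aux_F_surj hd H hH
      have hmem : a ∈ d.divisors := Nat.mem_divisors.mpr ⟨ha, hd.ne'⟩
      refine ⟨⟨⟨a, hmem⟩, ((t : ZMod a))⟩, ?_⟩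
      apply Subtype.ext
      show auxF d a ((t : ZMod a)).val = H
      · have : ((t : ZMod a)).val = t := by
          haveI : NeZero a := inst ⟨a, hmem⟩
          rw [ZMod.val_natCast, Nat.mod_eq_of_lt hta]
        rw [this, hEq]
  rw [← Nat.card_congr (Equiv.ofBijective e hbij)]
  rw [Nat.card_eq_fintype_card, Fintype.card_sigma]
  have hsum : ∀ x : d.divisors, Fintype.card (ZMod (x.1 : ℕ)) = (x.1 : ℕ) :=
    fun x => ZMod.card _
  simp_rw [hsum]
  exact Finset.sum_coe_sort d.divisors (fun b => b)
end

section
/- The extended symplectic group {M ∈ M₂(ℤ/dℤ) : det M = ±1} is generated by the three matrices V = (1,1;0,1) (vertical shear), R = (0,1;−1,0) (quarter rotation), and S = (−1,0;0,1) (momentum inversion). -/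
open Matrix

namespace ESGaux

variable {d : ℕ} [NeZero d]

def Ug (d : ℕ) [NeZero d] (t : ZMod d) : Matrix.GeneralLinearGroup (Fin 2) (ZMod d) :=
  ⟨!![1, t; 0, 1], !![1, -t; 0, 1],
   by rw [Matrix.mul_fin_two, Matrix.one_fin_two]; ring_nf,
   by rw [Matrix.mul_fin_two, Matrix.one_fin_two]; ring_nf⟩

def Lg (d : ℕ) [NeZero d] (t : ZMod d) : Matrix.GeneralLinearGroup (Fin 2) (ZMod d) :=
  ⟨!![1, 0; t, 1], !![1, 0; -t, 1],
   by rw [Matrix.mul_fin_two, Matrix.one_fin_two]; ring_nf,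
   by rw [Matrix.mul_fin_two, Matrix.one_fin_two]; ring_nf⟩

def Rg (d : ℕ) [NeZero d] : Matrix.GeneralLinearGroup (Fin 2) (ZMod d) :=
  ⟨!![0, 1; -1, 0], !![0, -1; 1, 0],
   by rw [Matrix.mul_fin_two, Matrix.one_fin_two]; ring_nf,
   by rw [Matrix.mul_fin_two, Matrix.one_fin_two]; ring_nf⟩

def Sg (d : ℕ) [NeZero d] : Matrix.GeneralLinearGroup (Fin 2) (ZMod d) :=
  ⟨!![-1, 0; 0, 1], !![-1, 0; 0, 1],
   by rw [Matrix.mul_fin_two, Matrix.one_fin_two]; ring_nf,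
   by rw [Matrix.mul_fin_two, Matrix.one_fin_two]; ring_nf⟩

abbrev genSet (d : ℕ) [NeZero d] : Set (Matrix.GeneralLinearGroup (Fin 2) (ZMod d)) :=
  {A : Matrix.GeneralLinearGroup (Fin 2) (ZMod d) |
        (A : Matrix (Fin 2) (Fin 2) (ZMod d)) = !![1, 1; 0, 1] ∨
        (A : Matrix (Fin 2) (Fin 2) (ZMod d)) = !![0, 1; -1, 0] ∨
        (A : Matrix (Fin 2) (Fin 2) (ZMod d)) = !![-1, 0; 0, 1]}

lemma memR : Rg d ∈ Subgroup.closure (genSet d) :=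
  Subgroup.subset_closure (Or.inr (Or.inl rfl))

lemma memS : Sg d ∈ Subgroup.closure (genSet d) :=
  Subgroup.subset_closure (Or.inr (Or.inr rfl))

lemma Ug_mul (a b : ZMod d) : Ug d a * Ug d b = Ug d (a + b) := by
  ext : 1
  show (!![1, a; 0, 1] * !![1, b; 0, 1] : Matrix _ _ _) = !![1, a + b; 0, 1]
  rw [Matrix.mul_fin_two]
  norm_num [add_comm]

lemma Ug_pow (n : ℕ) : (Ug d 1) ^ n = Ug d (n : ZMod d) := by
  induction n with
  | zero =>
    rw [pow_zero]
    ext : 1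
    show (1 : Matrix _ _ _) = !![1, ((0 : ℕ) : ZMod d); 0, 1]
    rw [Matrix.one_fin_two]
    norm_num
  | succ n ih =>
    rw [pow_succ, ih, Ug_mul]
    push_cast
    ring_nf

lemma memU (t : ZMod d) : Ug d t ∈ Subgroup.closure (genSet d) := by
  have h1 : Ug d 1 ∈ Subgroup.closure (genSet d) :=
    Subgroup.subset_closure (Or.inl rfl)
  have := pow_mem h1 t.val
  rwa [Ug_pow, ZMod.natCast_val, ZMod.cast_id] at this

lemma L_eq (t : ZMod d) : Lg d t = Rg d * Ug d (-t) * (Rg d)⁻¹ := by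
  ext : 1
  show (!![1, 0; t, 1] : Matrix _ _ _) =
    !![0, 1; -1, 0] * !![1, -t; 0, 1] * !![0, -1; 1, 0]
  rw [Matrix.mul_fin_two, Matrix.mul_fin_two]
  norm_num

lemma memL (t : ZMod d) : Lg d t ∈ Subgroup.closure (genSet d) := by
  rw [L_eq]
  exact mul_mem (mul_mem memR (memU _)) (inv_mem memR)

lemma key (d : ℕ) [NeZero d] (n : ℕ) :
    ∀ M : Matrix.GeneralLinearGroup (Fin 2) (ZMod d),
    ∀ N : Matrix (Fin 2) (Fin 2) ℤ, (N 1 0).natAbs = n →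
    (M : Matrix (Fin 2) (Fin 2) (ZMod d)) = N.map (Int.cast) →
    (M : Matrix (Fin 2) (Fin 2) (ZMod d)).det = 1 →
    M ∈ Subgroup.closure (genSet d) := by
  induction n using Nat.strong_induction_on with
  | _ n IH =>
  intro M N hn hMN hdet
  by_cases hc : N 1 0 = 0
  · -- triangular case
    set a : ZMod d := M.val 0 0 with ha
    set b : ZMod d := M.val 0 1 with hb
    set e : ZMod d := M.val 1 1 with he
    have hc' : M.val 1 0 = 0 := by
      rw [hMN, Matrix.map_apply, hc, Int.cast_zero]
    have hae : a * e = 1 := by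
      have h := hdet
      rw [Matrix.det_fin_two] at h
      rw [← ha, ← hb, ← he, hc', mul_zero, sub_zero] at h
      exact h
    have hea : e * a = 1 := by rw [mul_comm]; exact hae
    set Dg : Matrix.GeneralLinearGroup (Fin 2) (ZMod d) :=
      ⟨!![a, 0; 0, e], !![e, 0; 0, a],
       by rw [Matrix.mul_fin_two, Matrix.one_fin_two]; norm_num [hae, hea],
       by rw [Matrix.mul_fin_two, Matrix.one_fin_two]; norm_num [hae, hea]⟩ with hDg
    have memD : Dg ∈ Subgroup.closure (genSet d) := by
      have heq : Dg = Ug d a * Lg d (-e) * Ug d a * (Rg d)⁻¹ := by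
        ext : 1
        show (!![a, 0; 0, e] : Matrix _ _ _) =
          !![1, a; 0, 1] * !![1, 0; -e, 1] * !![1, a; 0, 1] * !![0, -1; 1, 0]
        rw [Matrix.mul_fin_two, Matrix.mul_fin_two, Matrix.mul_fin_two]
        ext i j
        fin_cases i <;> fin_cases j <;> simp <;>
          first
          | ring1
          | linear_combination hae
          | linear_combination -hae
          | linear_combination a * hae
          | linear_combination -a * hae
      rw [heq]
      exact mul_mem (mul_mem (mul_mem (memU a) (memL (-e))) (memU a)) (inv_mem memR)
    have hM : M = Dg * Ug d (e * b) := by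
      ext : 1
      show M.val = (!![a, 0; 0, e] * !![1, e * b; 0, 1] : Matrix _ _ _)
      rw [Matrix.mul_fin_two, Matrix.eta_fin_two M.val, ← ha, ← hb, ← he, hc']
      ext i j
      fin_cases i <;> fin_cases j <;> simp <;>
        first
        | ring1
        | linear_combination b * hae
        | linear_combination -b * hae
    rw [hM]
    exact mul_mem memD (memU _)
  · -- Euclid step
    set q : ℤ := N 0 0 / N 1 0 with hq
    set t : ZMod d := ((-q : ℤ) : ZMod d) with ht
    set N' : Matrix (Fin 2) (Fin 2) ℤ :=
      !![N 1 0, N 1 1; -(N 0 0 + (-q) * N 1 0), -(N 0 1 + (-q) * N 1 1)] with hN'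
    set M' : Matrix.GeneralLinearGroup (Fin 2) (ZMod d) := Rg d * Ug d t * M with hM'
    have hlt : (N' 1 0).natAbs < n := by
      have h10 : N' 1 0 = -(N 0 0 % N 1 0) := by
        show -(N 0 0 + (-q) * N 1 0) = _
        rw [Int.emod_def, hq]
        ring
      rw [h10, Int.natAbs_neg, ← hn]
      have h1 := Int.emod_nonneg (N 0 0) hc
      have h2 := Int.emod_lt_of_pos (N 0 0) (abs_pos.mpr hc)
      rw [Int.emod_abs] at h2
      rcases abs_cases (N 1 0) with ⟨h3, _⟩ | ⟨h3, _⟩ <;> omega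
    have hMN' : (M' : Matrix (Fin 2) (Fin 2) (ZMod d)) = N'.map (Int.cast) := by
      show (!![0, 1; -1, 0] * !![1, t; 0, 1] : Matrix _ _ _) * M.val = _
      rw [hMN, Matrix.eta_fin_two (N.map Int.cast)]
      simp only [Matrix.map_apply]
      rw [Matrix.mul_fin_two, Matrix.mul_fin_two]
      ext i j
      fin_cases i <;> fin_cases j <;>
        simp [hN', ht] <;> push_cast <;> ring
    have hdet' : (M' : Matrix (Fin 2) (Fin 2) (ZMod d)).det = 1 := by
      have hv : (M' : Matrix (Fin 2) (Fin 2) (ZMod d)) =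
          (!![0, 1; -1, 0] * !![1, t; 0, 1] : Matrix _ _ _) * M.val := rfl
      rw [hv, Matrix.det_mul, Matrix.det_mul, hdet, Matrix.det_fin_two_of,
        Matrix.det_fin_two_of]
      norm_num
    have hmem' := IH _ hlt M' N' rfl hMN' hdet'
    have hfin : M = (Ug d t)⁻¹ * ((Rg d)⁻¹ * M') := by
      rw [hM']; group
    rw [hfin]
    exact mul_mem (inv_mem (memU t)) (mul_mem (inv_mem memR) hmem')

end ESGaux

open ESGaux in
/-- The extended symplectic group `{M : det M = ±1}` over `ℤ/dℤ` is generated by the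
vertical shear `V = (1,1;0,1)`, the quarter rotation `R = (0,1;-1,0)` and the momentum
inversion `S = (-1,0;0,1)`. -/
theorem extended_symplectic_generated (d : ℕ) [NeZero d] :
    ∀ M : Matrix.GeneralLinearGroup (Fin 2) (ZMod d),
      ((M : Matrix (Fin 2) (Fin 2) (ZMod d)).det = 1 ∨
        (M : Matrix (Fin 2) (Fin 2) (ZMod d)).det = -1) ↔
      M ∈ Subgroup.closure {A : Matrix.GeneralLinearGroup (Fin 2) (ZMod d) |
        (A : Matrix (Fin 2) (Fin 2) (ZMod d)) = !![1, 1; 0, 1] ∨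
        (A : Matrix (Fin 2) (Fin 2) (ZMod d)) = !![0, 1; -1, 0] ∨
        (A : Matrix (Fin 2) (Fin 2) (ZMod d)) = !![-1, 0; 0, 1]} := by
  intro M
  constructor
  · rintro (hdet | hdet)
    · -- det = 1 : lift to ℤ and apply the key lemma
      set N : Matrix (Fin 2) (Fin 2) ℤ :=
        Matrix.of fun i j => ((M.val i j).val : ℤ) with hN
      have hMN : (M : Matrix (Fin 2) (Fin 2) (ZMod d)) = N.map (Int.cast) := by
        ext i j
        simp [hN, Matrix.map_apply, ZMod.natCast_val, ZMod.cast_id]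
      exact key d _ M N rfl hMN hdet
    · -- det = -1 : multiply by S
      have hdet' : ((Sg d * M : Matrix.GeneralLinearGroup (Fin 2) (ZMod d)) :
          Matrix (Fin 2) (Fin 2) (ZMod d)).det = 1 := by
        have hv : ((Sg d * M : Matrix.GeneralLinearGroup (Fin 2) (ZMod d)) :
            Matrix (Fin 2) (Fin 2) (ZMod d)) = !![(-1 : ZMod d), 0; 0, 1] * M.val := rfl
        rw [hv, Matrix.det_mul, Matrix.det_fin_two_of, hdet]
        norm_num
      set N : Matrix (Fin 2) (Fin 2) ℤ :=
        Matrix.of fun i j => ((((Sg d * M :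
          Matrix.GeneralLinearGroup (Fin 2) (ZMod d)) :
          Matrix (Fin 2) (Fin 2) (ZMod d)) i j).val : ℤ) with hN
      have hMN : ((Sg d * M : Matrix.GeneralLinearGroup (Fin 2) (ZMod d)) :
          Matrix (Fin 2) (Fin 2) (ZMod d)) = N.map (Int.cast) := by
        ext i j
        simp [hN, Matrix.map_apply, ZMod.natCast_val, ZMod.cast_id]
      have hmem := key d _ (Sg d * M) N rfl hMN hdet'
      have : M = (Sg d)⁻¹ * (Sg d * M) := by group
      rw [this]
      exact mul_mem (inv_mem memS) hmem
  · intro hM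
    induction hM using Subgroup.closure_induction with
    | mem x hx =>
      rcases hx with h | h | h <;> rw [h] <;> rw [Matrix.det_fin_two_of] <;> norm_num
    | one =>
      left
      show (1 : Matrix (Fin 2) (Fin 2) (ZMod d)).det = 1
      simp
    | mul x y hx hy ihx ihy =>
      have hv : ((x * y : Matrix.GeneralLinearGroup (Fin 2) (ZMod d)) :
          Matrix (Fin 2) (Fin 2) (ZMod d)) = x.val * y.val := rfl
      rw [hv, Matrix.det_mul]
      rcases ihx with h1 | h1 <;> rcases ihy with h2 | h2 <;> rw [h1, h2] <;> norm_num
    | inv x hx ihx =>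
      have hv : (x⁻¹ : Matrix.GeneralLinearGroup (Fin 2) (ZMod d)).val * x.val = 1 := by
        rw [← Units.val_mul, inv_mul_cancel, Units.val_one]
      have hd : ((x⁻¹ : Matrix.GeneralLinearGroup (Fin 2) (ZMod d)) :
          Matrix (Fin 2) (Fin 2) (ZMod d)).det * (x.val).det = 1 := by
        rw [← Matrix.det_mul, hv, Matrix.det_one]
      rcases ihx with h1 | h1
      · left
        rw [h1, mul_one] at hd
        exact hd
      · right
        rw [h1] at hd
        linear_combination -hd
end

section
/- If Q is a subgroup of order d of (ℤ/dℤ)² generated by (j,ℓ) and (k,m), then kℓ − jm ≡ 0 (mod d); consequently the corresponding Weyl operators W_{j,ℓ} and W_{k,m} commute up to the trivial phase, i.e., W_{j,ℓ} W_{k,m} = W_{k,m} W_{j,ℓ} · w^{kℓ−jm} with w^{kℓ−jm} = 1. -/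
open Complex Matrix

/-- `w d = e^{2πi/d}`. -/
noncomputable def w (d : ℕ) : ℂ := Complex.exp (2 * Real.pi * Complex.I / d)

/-- The Weyl operator `W_{k,ℓ}` on `ℂ^d`, acting by `W_{k,ℓ}|s⟩ = w^{k(s-ℓ)}|s-ℓ⟩`. -/
noncomputable def Weyl (d : ℕ) (k l : ZMod d) : Matrix (ZMod d) (ZMod d) ℂ :=
  fun r s => if r = s - l then w d ^ (k * (s - l)).val else 0

lemma w_pow_d (d : ℕ) [NeZero d] : w d ^ d = 1 := by
  have hd : (d : ℂ) ≠ 0 := Nat.cast_ne_zero.mpr (NeZero.ne d)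
  rw [w, ← Complex.exp_nat_mul]
  have hX : (d : ℂ) * (2 * (Real.pi : ℂ) * Complex.I / d) = 2 * Real.pi * Complex.I := by
    field_simp
  rw [hX]
  exact Complex.exp_two_pi_mul_I

lemma w_pow_mod (d : ℕ) [NeZero d] (n : ℕ) : w d ^ n = w d ^ (n % d) := by
  conv_lhs => rw [← Nat.div_add_mod n d]
  rw [pow_add, pow_mul, w_pow_d, one_pow, one_mul]

lemma w_val_add (d : ℕ) [NeZero d] (x y : ZMod d) :
    w d ^ x.val * w d ^ y.val = w d ^ (x + y).val := by
  rw [← pow_add, ZMod.val_add, ← w_pow_mod]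

/-- If `a • x = 0`, `b • y = 0` and `a*b ∣ d`, then `x*y = 0` in `ZMod d`. -/
lemma cross_zero (d : ℕ) [NeZero d] (a b : ℕ) (x y : ZMod d)
    (hx : (a : ZMod d) * x = 0) (hy : (b : ZMod d) * y = 0) (hab : a * b ∣ d) :
    x * y = 0 := by
  have hd : d ≠ 0 := NeZero.ne d
  have ha : a ≠ 0 := by rintro rfl; simp at hab; exact hd hab
  have hb : b ≠ 0 := by rintro rfl; simp at hab; exact hd hab
  have h1 : d ∣ a * x.val := by
    rw [← ZMod.natCast_eq_zero_iff]
    push_cast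
    rw [ZMod.natCast_val, ZMod.cast_id]
    exact hx
  have h2 : d ∣ b * y.val := by
    rw [← ZMod.natCast_eq_zero_iff]
    push_cast
    rw [ZMod.natCast_val, ZMod.cast_id]
    exact hy
  have h3 : d * d ∣ (a * b) * (x.val * y.val) := by
    have := mul_dvd_mul h1 h2
    calc d * d ∣ (a * x.val) * (b * y.val) := this
    _ = (a * b) * (x.val * y.val) := by ring
  have h4 : (a * b) * d ∣ (a * b) * (x.val * y.val) :=
    dvd_trans (mul_dvd_mul_right hab d) h3
  have h5 : d ∣ x.val * y.val :=
    (mul_dvd_mul_iff_left (mul_ne_zero ha hb)).mp h4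
  have : ((x.val * y.val : ℕ) : ZMod d) = 0 :=
    (ZMod.natCast_eq_zero_iff _ _).mpr h5
  rwa [Nat.cast_mul, ZMod.natCast_val, ZMod.cast_id, ZMod.natCast_val, ZMod.cast_id] at this

/-- Any subgroup of `(ℤ/d)²` of order `d` is isotropic for the symplectic form. -/
lemma isotropic (d : ℕ) [NeZero d] (Q : AddSubgroup (ZMod d × ZMod d))
    (hQ : Nat.card Q = d) {x y : ZMod d × ZMod d} (hx : x ∈ Q) (hy : y ∈ Q) :
    x.1 * y.2 = y.1 * x.2 := by
  haveI : Finite Q := Subtype.finite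
  obtain ⟨ι, hFin, p, hp, e, ⟨f⟩⟩ := AddCommGroup.equiv_directSum_zmod_of_finite Q
  haveI := hFin
  classical
  set n : ι → ℕ := fun i => p i ^ (e i) with hn
  haveI : ∀ i, NeZero (n i) := fun i => ⟨pow_ne_zero _ (hp i).pos.ne'⟩
  -- card of the direct sum
  have hcard : ∏ i, n i = d := by
    rw [← hQ]
    have e2 : Q ≃ ∀ i, ZMod (n i) := f.toEquiv.trans DFinsupp.equivFunOnFintype
    rw [Nat.card_congr e2, Nat.card_pi]
    simp [Nat.card_zmod]
  set u : ι → ZMod d × ZMod d :=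
    fun i => ((f.symm (DirectSum.of (fun i => ZMod (n i)) i 1)) : ZMod d × ZMod d) with hu
  -- each u i is killed by n i
  have hord : ∀ i, (n i) • u i = 0 := by
    intro i
    have hq : (n i) • (f.symm (DirectSum.of (fun i => ZMod (n i)) i 1)) = 0 := by
      rw [← map_nsmul, ← map_nsmul]
      have h1 : (n i) • (1 : ZMod (n i)) = 0 := by
        rw [nsmul_eq_mul, mul_one, ZMod.natCast_self]
      rw [h1, map_zero, map_zero]
    have := congrArg (Q.subtype) hq
    rw [map_nsmul, map_zero] at this
    exact this
  have hord1 : ∀ i, ((n i : ℕ) : ZMod d) * (u i).1 = 0 := by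
    intro i
    have := congrArg Prod.fst (hord i)
    rwa [Prod.smul_fst, nsmul_eq_mul] at this
  have hord2 : ∀ i, ((n i : ℕ) : ZMod d) * (u i).2 = 0 := by
    intro i
    have := congrArg Prod.snd (hord i)
    rwa [Prod.smul_snd, nsmul_eq_mul] at this
  have hdvd : ∀ i j, i ≠ j → n i * n j ∣ d := by
    intro i j hij
    rw [← hcard, ← Finset.mul_prod_erase Finset.univ n (Finset.mem_univ i)]
    exact mul_dvd_mul_left (n i)
      (Finset.dvd_prod_of_mem n (Finset.mem_erase.mpr ⟨hij.symm, Finset.mem_univ j⟩))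
  have hZ : ∀ i j, i ≠ j → (u i).1 * (u j).2 = 0 := fun i j hij =>
    cross_zero d (n i) (n j) _ _ (hord1 i) (hord2 j) (hdvd i j hij)
  -- decomposition of elements of Q
  have decomp : ∀ (z : ZMod d × ZMod d), z ∈ Q → ∃ c : ι → ℕ, z = ∑ i, (c i) • u i := by
    intro z hz
    refine ⟨fun i => (f ⟨z, hz⟩ i).val, ?_⟩
    have h1 : (⟨z, hz⟩ : Q) =
        ∑ i, ((f ⟨z, hz⟩ i).val) • (f.symm (DirectSum.of (fun i => ZMod (n i)) i 1)) := by
      calc (⟨z, hz⟩ : Q) = f.symm (f ⟨z, hz⟩) := (f.symm_apply_apply _).symm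
        _ = f.symm (∑ i, DirectSum.of (fun i => ZMod (n i)) i (f ⟨z, hz⟩ i)) := by
            rw [DirectSum.sum_univ_of]
        _ = ∑ i, f.symm (DirectSum.of (fun i => ZMod (n i)) i (f ⟨z, hz⟩ i)) :=
            map_sum _ _ _
        _ = ∑ i, ((f ⟨z, hz⟩ i).val) • (f.symm (DirectSum.of (fun i => ZMod (n i)) i 1)) := by
            refine Finset.sum_congr rfl (fun i _ => ?_)
            rw [← map_nsmul, ← map_nsmul]
            congr 1
            rw [nsmul_eq_mul, mul_one, ZMod.natCast_val, ZMod.cast_id]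
    have := congrArg (Q.subtype) h1
    rw [map_sum] at this
    simp only [map_nsmul] at this
    exact this
  obtain ⟨c, hcx⟩ := decomp x hx
  obtain ⟨b, hby⟩ := decomp y hy
  have hx1 : x.1 = ∑ i, ((c i : ℕ) : ZMod d) * (u i).1 := by
    rw [hcx, Prod.fst_sum]
    exact Finset.sum_congr rfl (fun i _ => by rw [Prod.smul_fst, nsmul_eq_mul])
  have hx2 : x.2 = ∑ i, ((c i : ℕ) : ZMod d) * (u i).2 := by
    rw [hcx, Prod.snd_sum]
    exact Finset.sum_congr rfl (fun i _ => by rw [Prod.smul_snd, nsmul_eq_mul])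
  have hy1 : y.1 = ∑ i, ((b i : ℕ) : ZMod d) * (u i).1 := by
    rw [hby, Prod.fst_sum]
    exact Finset.sum_congr rfl (fun i _ => by rw [Prod.smul_fst, nsmul_eq_mul])
  have hy2 : y.2 = ∑ i, ((b i : ℕ) : ZMod d) * (u i).2 := by
    rw [hby, Prod.snd_sum]
    exact Finset.sum_congr rfl (fun i _ => by rw [Prod.smul_snd, nsmul_eq_mul])
  have key : ∀ (v w' : ι → ℕ),
      (∑ i, ((v i : ℕ) : ZMod d) * (u i).1) * (∑ i, ((w' i : ℕ) : ZMod d) * (u i).2) =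
        ∑ i, ((v i : ℕ) : ZMod d) * (w' i) * ((u i).1 * (u i).2) := by
    intro v w'
    rw [Finset.sum_mul_sum]
    refine Finset.sum_congr rfl (fun i _ => ?_)
    rw [Finset.sum_eq_single i]
    · ring
    · intro jj _ hjj
      linear_combination ((v i : ZMod d) * (w' jj : ZMod d)) * hZ i jj (Ne.symm hjj)
    · intro h; exact absurd (Finset.mem_univ _) h
  rw [hx1, hy2, hy1, hx2, key, key]
  exact Finset.sum_congr rfl (fun i _ => by ring)
/-- If the subgroup of `(ℤ/dℤ)²` generated by `(j,ℓ)` and `(k,m)` has exactly `d`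
elements, then `kℓ - jm ≡ 0 (mod d)`, so the Weyl operators `W_{j,ℓ}` and `W_{k,m}`
commute, the phase `w^{kℓ-jm}` being trivial. -/
theorem sublattice_weyl_commute (d : ℕ) [NeZero d] (j l k m : ZMod d)
    (hQ : Nat.card (AddSubgroup.closure {(j, l), (k, m)} : AddSubgroup (ZMod d × ZMod d)) = d) :
    k * l - j * m = 0 ∧
    w d ^ (k * l - j * m).val = 1 ∧
    Weyl d j l * Weyl d k m = Weyl d k m * Weyl d j l := by
  have hg1 : ((j, l) : ZMod d × ZMod d) ∈ AddSubgroup.closure {(j, l), (k, m)} :=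
    AddSubgroup.subset_closure (by simp)
  have hg2 : ((k, m) : ZMod d × ZMod d) ∈ AddSubgroup.closure {(j, l), (k, m)} :=
    AddSubgroup.subset_closure (by simp)
  have hkl : k * l = j * m := isotropic d _ hQ hg2 hg1
  refine ⟨by rw [hkl]; ring, ?_, ?_⟩
  · rw [show k * l - j * m = 0 by rw [hkl]; ring]
    simp [ZMod.val_zero]
  · have mulW : ∀ (a b c e : ZMod d) (r s : ZMod d),
        (Weyl d a b * Weyl d c e) r s =
          if r = s - e - b then w d ^ ((a * (s - e - b) + c * (s - e)).val) else 0 := by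
      intro a b c e r s
      rw [Matrix.mul_apply]
      rw [Finset.sum_eq_single (s - e)]
      · simp only [Weyl, if_pos rfl]
        split_ifs with h
        · rw [w_val_add]
        · rw [zero_mul]
      · intro t _ ht
        simp only [Weyl, if_neg ht, mul_zero]
      · intro h; exact absurd (Finset.mem_univ _) h
    ext r s
    rw [mulW, mulW]
    have hcond : s - m - l = s - l - m := by ring
    have hexp : j * (s - l - m) + k * (s - m) = k * (s - l - m) + j * (s - l) := by
      linear_combination hkl
    rw [hcond, hexp]
end
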